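/- In the braid group B_q, for 2 ≤ r < q, the identity (Π_{r-1})⁻¹ · Π_{q-1}^r · Π_{q-2}^{r-1} ⋯ Π_{q-r+1}^2 · Π_{q-r} = Π_{q-1}^r · Π_{q-2}^{r-1} ⋯ Π_{q-r+1}^2 · Π_{q-r} · (Π_{q-1}^{q-r+1})⁻¹ holds. -/

import Mathlib

/-!
Conjugation by `Π_{q-1} = σ_1 ⋯ σ_{q-1}` sends `σ_i` to `σ_{i+1}` for `1 ≤ i ≤ q - 2`
(a braid relation at `σ_i σ_{i+1}`, commutation elsewhere), hence `Π_s^l` to `Π_{s+1}^{l+1}`.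
Splitting the middle product `M` as `Π_{q-1}^r T` and as `T' Π_{q-r}`, where `T'` is the
shift of `T`, gives
`Π_{r-1} M = Π_{q-1} T = T' Π_{q-1} = T' Π_{q-r} Π_{q-1}^{q-r+1} = M Π_{q-1}^{q-r+1}`.
-/

/-- Defining relations for the braid group `B n` on `n` strands, with Artin
generators `σ_1, …, σ_{n-1}`.  Generators with index `0` or `≥ n` are killed,
so the presented group is exactly `B n`. -/
def braidRels (n : ℕ) : Set (FreeGroup ℕ) :=
  {r | (∃ i, 1 ≤ i ∧ i + 2 ≤ n ∧
        r = FreeGroup.of i * FreeGroup.of (i + 1) * FreeGroup.of i *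
            (FreeGroup.of (i + 1) * FreeGroup.of i * FreeGroup.of (i + 1))⁻¹) ∨
      (∃ i j, 1 ≤ i ∧ i + 2 ≤ j ∧ j + 1 ≤ n ∧
        r = FreeGroup.of i * FreeGroup.of j * (FreeGroup.of j * FreeGroup.of i)⁻¹) ∨
      (∃ i, (i = 0 ∨ n ≤ i) ∧ r = FreeGroup.of i)}

/-- The braid group on `n` strands. -/
def BraidGroup (n : ℕ) : Type := PresentedGroup (braidRels n)

instance (n : ℕ) : Group (BraidGroup n) := by unfold BraidGroup; infer_instance

/-- The Artin generator `σ_i` of `B n`. -/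
def sigma (n i : ℕ) : BraidGroup n := PresentedGroup.of i

/-- `Π_s^l = σ_l σ_{l+1} ⋯ σ_s`  (the identity when `s < l`). -/
def Pi' (n l s : ℕ) : BraidGroup n := ((List.range' l (s + 1 - l)).map (sigma n)).prod

/-- `Δ_s^l = Π_s^l Π_{s-1}^l ⋯ Π_l^l`  (the identity when `s < l`). -/
def Delta (n l s : ℕ) : BraidGroup n :=
  ((List.range (s + 1 - l)).map (fun k => Pi' n l (s - k))).prod

theorem SemiconjBy.list_prod_map {M ι : Type*} [Monoid M] {a : M} {f g : ι → M} :
    ∀ {L : List ι}, (∀ i ∈ L, SemiconjBy a (f i) (g i)) →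
      SemiconjBy a (L.map f).prod (L.map g).prod
  | [], _ => SemiconjBy.one_right a
  | i :: _, h => (h i List.mem_cons_self).mul_right
      (list_prod_map fun j hj => h j (List.mem_cons_of_mem i hj))

section

variable {n : ℕ}

theorem sigma_mul_sigma_mul_sigma {i : ℕ} (hi : 1 ≤ i) (hin : i + 2 ≤ n) :
    sigma n i * sigma n (i + 1) * sigma n i = sigma n (i + 1) * sigma n i * sigma n (i + 1) :=
  PresentedGroup.mk_eq_mk_of_mul_inv_mem (Or.inl ⟨i, hi, hin, rfl⟩)

theorem sigma_commute {i j : ℕ} (hi : 1 ≤ i) (hij : i + 2 ≤ j) (hjn : j + 1 ≤ n) :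
    Commute (sigma n i) (sigma n j) :=
  PresentedGroup.mk_eq_mk_of_mul_inv_mem (Or.inr (Or.inl ⟨i, j, hi, hij, hjn, rfl⟩))

theorem Pi'_self (s : ℕ) : Pi' n s s = sigma n s := by
  simp [Pi']

theorem Pi'_mul_Pi' {l s t : ℕ} (hls : l ≤ s + 1) (hst : s ≤ t) :
    Pi' n l s * Pi' n (s + 1) t = Pi' n l t := by
  have hlen : t + 1 - l = (s + 1 - l) + (t + 1 - (s + 1)) := by omega
  rw [Pi', Pi', Pi', ← List.prod_append, ← List.map_append, hlen, ← List.range'_append_1,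
    Nat.add_sub_cancel' hls]

theorem Pi'_succ {l s : ℕ} (h : l ≤ s + 1) : Pi' n l (s + 1) = Pi' n l s * sigma n (s + 1) := by
  rw [← Pi'_self, Pi'_mul_Pi' h s.le_succ]

theorem sigma_commute_Pi' {i l s : ℕ} (hi : 1 ≤ i) (hil : i + 2 ≤ l) (hsn : s + 1 ≤ n) :
    Commute (sigma n i) (Pi' n l s) :=
  Commute.list_prod_right _ _ <| by
    simp only [List.forall_mem_map, List.mem_range']
    intro j hj
    exact sigma_commute hi (by omega) (by omega)

theorem Pi'_commute_sigma {j l s : ℕ} (hl : 1 ≤ l) (hsj : s + 2 ≤ j) (hjn : j + 1 ≤ n) :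
    Commute (Pi' n l s) (sigma n j) :=
  Commute.list_prod_left _ _ <| by
    simp only [List.forall_mem_map, List.mem_range']
    intro i hi
    exact sigma_commute (by omega) (by omega) hjn

theorem semiconjBy_Pi'_sigma {l t i : ℕ} (hl : 1 ≤ l) (hli : l ≤ i) (hit : i + 1 ≤ t)
    (htn : t + 1 ≤ n) : SemiconjBy (Pi' n l t) (sigma n i) (sigma n (i + 1)) := by
  obtain ⟨k, rfl⟩ : ∃ k, i = k + 1 := ⟨i - 1, by omega⟩
  set P := Pi' n l k
  set R := Pi' n (k + 3) t
  have hsplit : Pi' n l t = P * sigma n (k + 1) * sigma n (k + 2) * R := by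
    rw [← Pi'_mul_Pi' (s := k + 2) (by omega) (by omega), Pi'_succ (by omega),
      Pi'_succ (by omega)]
  have hR : Commute (sigma n (k + 1)) R := sigma_commute_Pi' (by omega) le_rfl (by omega)
  have hP : Commute P (sigma n (k + 2)) := Pi'_commute_sigma hl le_rfl (by omega)
  have hbraid := sigma_mul_sigma_mul_sigma (n := n) (i := k + 1) (by omega) (by omega)
  rw [SemiconjBy, hsplit]
  calc P * sigma n (k + 1) * sigma n (k + 2) * R * sigma n (k + 1)
      = P * (sigma n (k + 1) * sigma n (k + 2) * sigma n (k + 1)) * R := by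
        rw [mul_assoc _ R, ← hR.eq]; group
    _ = P * sigma n (k + 2) * (sigma n (k + 1) * sigma n (k + 2) * R) := by
        rw [hbraid]; group
    _ = sigma n (k + 2) * (P * sigma n (k + 1) * sigma n (k + 2) * R) := by
        rw [hP.eq]; group

theorem semiconjBy_Pi'_Pi' {l t a b : ℕ} (hl : 1 ≤ l) (hla : l ≤ a) (hbt : b + 1 ≤ t)
    (htn : t + 1 ≤ n) : SemiconjBy (Pi' n l t) (Pi' n a b) (Pi' n (a + 1) (b + 1)) := by
  have hshift : Pi' n (a + 1) (b + 1) =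
      ((List.range' a (b + 1 - a)).map fun i => sigma n (i + 1)).prod := by
    rw [Pi', show b + 1 + 1 - (a + 1) = b + 1 - a by omega, add_comm a, ← List.map_add_range',
      List.map_map]
    simp only [Function.comp_def, add_comm 1]
  rw [hshift]
  refine SemiconjBy.list_prod_map fun i hi => ?_
  rw [List.mem_range'_1] at hi
  exact semiconjBy_Pi'_sigma hl (by omega) (by omega) htn

end

theorem stmt7 (q r : ℕ) (hr : 2 ≤ r) (hrq : r < q) :
    (Pi' q 1 (r - 1))⁻¹ * ((List.range r).map (fun j => Pi' q (r - j) (q - 1 - j))).prod =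
      ((List.range r).map (fun j => Pi' q (r - j) (q - 1 - j))).prod * (Pi' q (q - r + 1) (q - 1))⁻¹ := by
  obtain ⟨k, rfl⟩ : ∃ k, r = k + 1 := ⟨r - 1, by omega⟩
  set M := ((List.range (k + 1)).map fun j => Pi' q (k + 1 - j) (q - 1 - j)).prod
  set tail := ((List.range k).map fun j => Pi' q (k + 1 - (j + 1)) (q - 1 - (j + 1))).prod
  set init := ((List.range k).map fun j => Pi' q (k + 1 - j) (q - 1 - j)).prod
  have hhead : M = Pi' q (k + 1) (q - 1) * tail := List.prod_range_succ' _ k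
  have hlast : M = init * Pi' q 1 (q - 1 - k) :=
    (List.prod_range_succ _ k).trans (by rw [Nat.add_sub_cancel_left])
  have hshift : SemiconjBy (Pi' q 1 (q - 1)) tail init := by
    have hinit : init = ((List.range k).map fun j =>
        Pi' q (k + 1 - (j + 1) + 1) (q - 1 - (j + 1) + 1)).prod := by
      refine congrArg List.prod (List.map_congr_left fun j hj => ?_)
      rw [List.mem_range] at hj
      congr 1 <;> omega
    rw [hinit]
    refine SemiconjBy.list_prod_map fun j hj => ?_
    rw [List.mem_range] at hj
    exact semiconjBy_Pi'_Pi' le_rfl (by omega) (by omega) (by omega)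
  have key : Pi' q 1 k * M = M * Pi' q (q - 1 - k + 1) (q - 1) := calc
    Pi' q 1 k * M = Pi' q 1 k * Pi' q (k + 1) (q - 1) * tail := by rw [hhead, mul_assoc]
    _ = Pi' q 1 (q - 1) * tail := by rw [Pi'_mul_Pi' (by omega) (by omega)]
    _ = init * Pi' q 1 (q - 1) := hshift
    _ = init * (Pi' q 1 (q - 1 - k) * Pi' q (q - 1 - k + 1) (q - 1)) := by
      rw [Pi'_mul_Pi' (by omega) (by omega)]
    _ = M * Pi' q (q - 1 - k + 1) (q - 1) := by rw [hlast, mul_assoc]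
  rw [Nat.add_sub_cancel, show q - (k + 1) = q - 1 - k by omega, inv_mul_eq_iff_eq_mul,
    ← mul_assoc, key, mul_inv_cancel_right]
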